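/- arXiv:1612.08639 — 4 statements merged into one kernel-verified Lean document; each statement's English description precedes it below -/
import Mathlib

section
/- Let Y : (−1,1) → L²(Ω) be twice mean-square differentiable with mean-square continuous second derivative, and let A ∈ L⁴(Ω). Suppose Y satisfies the random Chebyshev equation (1 − s²)·Y''(s) − s·Y'(s) + A²·Y(s) = 0 for all s ∈ (−1,1), where A²·Y(s) denotes pointwise multiplication. Then X(t) := Y(cos t) satisfies X''(t) + A²·X(t) = 0 for all t ∈ (0, π). -/
open MeasureTheory Set Real

/-- If `Y` satisfies the random Chebyshev equation
`(1 − s²) Y''(s) − s Y'(s) + A² Y(s) = 0` on `(−1,1)` (with `A ∈ L⁴(Ω)` and `A²·Y(s)`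
denoting the a.e.-pointwise product, assumed to lie in `L²(Ω)`), then
`X(t) = Y(cos t)` satisfies `X''(t) + A²·X(t) = 0` on `(0,π)`. -/
theorem ms_chebyshev_to_oscillator
    {Ω : Type*} [MeasurableSpace Ω] (μ : Measure Ω) [IsProbabilityMeasure μ]
    {A : Ω → ℝ} (hA : MemLp A 4 μ)
    {Y Y' Y'' AY : ℝ → Lp ℝ 2 μ}
    (hAY : ∀ s ∈ Ioo (-1 : ℝ) 1,
      (AY s : Ω → ℝ) =ᵐ[μ] fun ω => (A ω) ^ 2 * (Y s : Ω → ℝ) ω)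
    (hY : ∀ s ∈ Ioo (-1 : ℝ) 1, HasDerivAt Y (Y' s) s)
    (hY' : ∀ s ∈ Ioo (-1 : ℝ) 1, HasDerivAt Y' (Y'' s) s)
    (hY'' : ContinuousOn Y'' (Ioo (-1 : ℝ) 1))
    (heq : ∀ s ∈ Ioo (-1 : ℝ) 1, (1 - s ^ 2) • Y'' s - s • Y' s + AY s = 0) :
    ∃ X' X'' : ℝ → Lp ℝ 2 μ,
      ∀ t ∈ Ioo (0 : ℝ) π,
        HasDerivAt (fun t => Y (cos t)) (X' t) t ∧
        HasDerivAt X' (X'' t) t ∧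
        X'' t + AY (cos t) = 0 := by
  refine ⟨fun t => (-sin t) • Y' (cos t),
    fun t => (-cos t) • Y' (cos t) + (sin t) ^ 2 • Y'' (cos t), fun t ht => ?_⟩
  have hmem : cos t ∈ Ioo (-1 : ℝ) 1 := by
    constructor
    · have := Real.cos_lt_cos_of_nonneg_of_le_pi (le_of_lt ht.1) le_rfl ht.2
      rwa [Real.cos_pi] at this
    · have := Real.cos_lt_cos_of_nonneg_of_le_pi le_rfl (le_of_lt ht.2) ht.1
      rwa [Real.cos_zero] at this
  have hc : HasDerivAt Real.cos (-Real.sin t) t := Real.hasDerivAt_cos t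
  have h1 : HasDerivAt (fun t => Y (cos t)) ((-sin t) • Y' (cos t)) t :=
    (hY _ hmem).scomp t hc
  have h2 : HasDerivAt (fun t => Y' (cos t)) ((-sin t) • Y'' (cos t)) t :=
    (hY' _ hmem).scomp t hc
  have hsin : HasDerivAt (fun t => -sin t) (-cos t) t := (Real.hasDerivAt_sin t).neg
  have h3 : HasDerivAt (fun t => (-sin t) • Y' (cos t))
      ((-sin t) • (-sin t) • Y'' (cos t) + (-cos t) • Y' (cos t)) t := hsin.smul h2
  refine ⟨h1, ?_, ?_⟩
  · convert h3 using 1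
    rw [smul_smul, neg_mul_neg, ← sq]
    abel
  · have h4 := heq (cos t) hmem
    have hs : sin t ^ 2 = 1 - cos t ^ 2 := Real.sin_sq t
    show (-cos t) • Y' (cos t) + sin t ^ 2 • Y'' (cos t) + AY (cos t) = 0
    rw [hs]
    rw [show (-cos t) • Y' (cos t) + (1 - cos t ^ 2) • Y'' (cos t) + AY (cos t)
        = (1 - cos t ^ 2) • Y'' (cos t) - cos t • Y' (cos t) + AY (cos t) by
      rw [neg_smul]; abel]
    exact h4
end

section
/- Let A² be a nonnegative random variable such that there exist M > 0 and 0 ≤ κ < 2 with ‖(A²)^n‖₂ ≤ C·M^{n−1}·((n−1)!)^κ for all n ≥ 1 and some constant C. Then for every fixed t ∈ ℝ, the series ∑_{k≥0} (−1)^k (A²)^k t^{2k} / (2k)! converges in L²(Ω), i.e. the random cosine process cos(At) is well defined as a mean-square limit of its partial sums. -/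
open MeasureTheory

open Filter

/-- If `‖(A²)^n‖₂ ≤ C M^{n−1} ((n−1)!)^κ` with `0 ≤ κ < 2`, then for every `t ∈ ℝ`
the partial sums of `∑ (−1)^k (A²)^k t^{2k}/(2k)!` form a Cauchy sequence in `L²(Ω)`,
i.e. `cos(At)` is well defined as a mean-square limit. -/
theorem random_cosine_series_ms_convergent
    {Ω : Type*} [MeasurableSpace Ω] (μ : Measure Ω) [IsProbabilityMeasure μ]
    {A : Ω → ℝ} (hmem : ∀ n : ℕ, MemLp (fun ω => ((A ω) ^ 2) ^ n) 2 μ)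
    {C M κ : ℝ} (hM : 0 < M) (hκ0 : 0 ≤ κ) (hκ2 : κ < 2)
    (hbd : ∀ n : ℕ, 1 ≤ n →
      ‖(hmem n).toLp (fun ω => ((A ω) ^ 2) ^ n)‖ ≤
        C * M ^ (n - 1) * ((n - 1).factorial : ℝ) ^ κ)
    (t : ℝ) :
    CauchySeq (fun N : ℕ => ∑ k ∈ Finset.range (N + 1),
      ((-1 : ℝ) ^ k * t ^ (2 * k) / ((2 * k).factorial : ℝ)) •
        (hmem k).toLp (fun ω => ((A ω) ^ 2) ^ k)) := by
  set f : ℕ → Lp ℝ 2 μ := fun k =>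
    ((-1 : ℝ) ^ k * t ^ (2 * k) / ((2 * k).factorial : ℝ)) •
      (hmem k).toLp (fun ω => ((A ω) ^ 2) ^ k) with hf
  have hC : 0 ≤ C := by
    have h1 := hbd 1 le_rfl
    have h0 := norm_nonneg ((hmem 1).toLp (fun ω => ((A ω) ^ 2) ^ 1))
    simpa using le_trans h0 h1
  set s : ℝ := t ^ 2 + 1 with hs_def
  have hs : 0 < s := by positivity
  have ht2 : t ^ 2 ≤ s := by simp [hs_def]
  set g : ℕ → ℝ := fun k =>
    (C + 1) * M ^ k * ((k.factorial : ℝ)) ^ κ * s ^ (k + 1) /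
      (((2 * (k + 1)).factorial : ℝ)) with hg_def
  have hgpos : ∀ k, 0 < g k := by
    intro k
    have h1 : (0:ℝ) < C + 1 := by linarith
    have h2 : (0:ℝ) < ((k.factorial : ℝ)) ^ κ :=
      Real.rpow_pos_of_pos (by exact_mod_cast k.factorial_pos) κ
    have h3 : (0:ℝ) < ((2 * (k + 1)).factorial : ℝ) := by
      exact_mod_cast (2 * (k + 1)).factorial_pos
    positivity
  -- ratio identity
  have hratio : ∀ n : ℕ, g (n + 1) =
      g n * (M * s * ((n : ℝ) + 1) ^ κ / ((2 * (n : ℝ) + 4) * (2 * (n : ℝ) + 3))) := by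
    intro n
    have hfac1 : (((n + 1).factorial : ℝ)) ^ κ =
        ((n : ℝ) + 1) ^ κ * ((n.factorial : ℝ)) ^ κ := by
      rw [← Real.mul_rpow (by positivity) (by exact_mod_cast (n.factorial_pos).le)]
      congr 1
      push_cast [Nat.factorial_succ]
      ring
    have hfac2 : (((2 * (n + 1 + 1)).factorial : ℝ)) =
        (2 * (n : ℝ) + 4) * ((2 * (n : ℝ) + 3) * ((2 * (n + 1)).factorial : ℝ)) := by
      have : 2 * (n + 1 + 1) = (2 * (n + 1) + 1) + 1 := by ring
      rw [this, Nat.factorial_succ, Nat.factorial_succ]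
      push_cast
      ring
    have hfpos : (0:ℝ) < ((2 * (n + 1)).factorial : ℝ) := by
      exact_mod_cast (2 * (n + 1)).factorial_pos
    rw [hg_def]
    simp only
    rw [hfac1, hfac2]
    field_simp
    ring
  have hg : Summable g := by
    apply summable_of_ratio_norm_eventually_le (r := 1/2) (by norm_num)
    have hto : Tendsto (fun n : ℕ => M * s * ((n : ℝ) + 1) ^ (κ - 2)) atTop (nhds 0) := by
      have h1 : Tendsto (fun n : ℕ => ((n : ℝ) + 1)) atTop atTop :=
        tendsto_atTop_add_const_right _ 1 tendsto_natCast_atTop_atTop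
      have h2 : Tendsto (fun x : ℝ => x ^ (κ - 2)) atTop (nhds 0) := by
        have := tendsto_rpow_neg_atTop (y := 2 - κ) (by linarith)
        simpa [neg_sub] using this
      have h3 := (h2.comp h1).const_mul (M * s)
      simpa using h3
    filter_upwards [hto.eventually_lt_const (show (0:ℝ) < 1/2 by norm_num)] with n hn
    have hpos₁ := hgpos n
    have hpos₂ := hgpos (n + 1)
    rw [Real.norm_of_nonneg hpos₂.le, Real.norm_of_nonneg hpos₁.le, hratio n]
    have hkey : M * s * ((n : ℝ) + 1) ^ κ / ((2 * (n : ℝ) + 4) * (2 * (n : ℝ) + 3)) ≤ 1/2 := by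
      have hb : ((n : ℝ) + 1) ^ (2:ℝ) ≤ (2 * (n : ℝ) + 4) * (2 * (n : ℝ) + 3) := by
        rw [show ((2:ℝ)) = ((2:ℕ):ℝ) by norm_num, Real.rpow_natCast]
        push_cast
        nlinarith [Nat.cast_nonneg (α := ℝ) n]
      have hsplit : ((n : ℝ) + 1) ^ κ =
          ((n : ℝ) + 1) ^ (κ - 2) * ((n : ℝ) + 1) ^ (2:ℝ) := by
        rw [← Real.rpow_add (by positivity)]
        ring_nf
      calc M * s * ((n : ℝ) + 1) ^ κ / ((2 * (n : ℝ) + 4) * (2 * (n : ℝ) + 3))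
          = (M * s * ((n : ℝ) + 1) ^ (κ - 2)) *
            (((n : ℝ) + 1) ^ (2:ℝ) / ((2 * (n : ℝ) + 4) * (2 * (n : ℝ) + 3))) := by
            rw [hsplit]; ring
        _ ≤ (M * s * ((n : ℝ) + 1) ^ (κ - 2)) * 1 := by
            apply mul_le_mul_of_nonneg_left _ (by positivity)
            rw [div_le_one (by positivity)]
            exact hb
        _ ≤ 1/2 := by rw [mul_one]; exact hn.le
    calc g n * (M * s * ((n : ℝ) + 1) ^ κ / ((2 * (n : ℝ) + 4) * (2 * (n : ℝ) + 3)))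
        ≤ g n * (1/2) := mul_le_mul_of_nonneg_left hkey hpos₁.le
      _ = 1/2 * g n := by ring
  have hle : ∀ k : ℕ, ‖f (k + 1)‖ ≤ g k := by
    intro k
    rw [hf]
    simp only
    rw [norm_smul]
    have habs : ‖(-1 : ℝ) ^ (k+1) * t ^ (2 * (k+1)) / (((2 * (k+1)).factorial : ℝ))‖ =
        (t ^ 2) ^ (k+1) / (((2 * (k+1)).factorial : ℝ)) := by
      simp [abs_mul, abs_div, abs_pow, pow_mul, sq_abs]
    rw [habs]
    have hb := hbd (k + 1) (Nat.le_add_left 1 k)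
    simp only [Nat.add_sub_cancel] at hb
    have hfpos : (0:ℝ) < ((2 * (k + 1)).factorial : ℝ) := by
      exact_mod_cast (2 * (k + 1)).factorial_pos
    have h1 : (t ^ 2) ^ (k+1) / (((2 * (k+1)).factorial : ℝ)) *
        ‖(hmem (k+1)).toLp (fun ω => ((A ω) ^ 2) ^ (k+1))‖ ≤
        (t ^ 2) ^ (k+1) / (((2 * (k+1)).factorial : ℝ)) * (C * M ^ k * ((k.factorial : ℝ)) ^ κ) := by
      apply mul_le_mul_of_nonneg_left hb (by positivity)
    refine h1.trans ?_
    rw [hg_def]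
    simp only
    rw [div_mul_eq_mul_div, div_le_div_iff₀ hfpos hfpos]
    apply mul_le_mul_of_nonneg_right _ hfpos.le
    have h2 : (t ^ 2) ^ (k+1) ≤ s ^ (k+1) := pow_le_pow_left₀ (by positivity) ht2 _
    have h3 : (0:ℝ) ≤ ((k.factorial : ℝ)) ^ κ :=
      (Real.rpow_pos_of_pos (by exact_mod_cast k.factorial_pos) κ).le
    calc (t ^ 2) ^ (k+1) * (C * M ^ k * ((k.factorial : ℝ)) ^ κ)
        ≤ s ^ (k+1) * (C * M ^ k * ((k.factorial : ℝ)) ^ κ) := by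
          apply mul_le_mul_of_nonneg_right h2 (by positivity)
      _ ≤ s ^ (k+1) * ((C + 1) * M ^ k * ((k.factorial : ℝ)) ^ κ) := by
          apply mul_le_mul_of_nonneg_left _ (by positivity)
          apply mul_le_mul_of_nonneg_right _ h3
          apply mul_le_mul_of_nonneg_right (by linarith) (le_of_lt (pow_pos hM k))
      _ = (C + 1) * M ^ k * ((k.factorial : ℝ)) ^ κ * s ^ (k + 1) := by ring
  have hsum : Summable f := by
    rw [← summable_nat_add_iff 1]
    exact Summable.of_norm_bounded hg hle
  have h1 := hsum.hasSum.tendsto_sum_nat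
  have h2 : Tendsto (fun N : ℕ => ∑ k ∈ Finset.range (N + 1), f k) atTop
      (nhds (∑' k, f k)) := h1.comp (tendsto_add_atTop_nat 1)
  exact h2.cauchySeq
end

section
/- Let A² be a nonnegative random variable satisfying ‖(A²)^n‖₂ ≤ C·M^{n−1}·((n−1)!)^κ for all n ≥ 1 with M > 0 and 0 ≤ κ < 2. Then for every fixed t ∈ ℝ, the series ∑_{k≥0} (−1)^k (A²)^k t^{2k+1} / (2k+1)! converges in L²(Ω); its pointwise a.s. limit equals sin(A(ω)t)/A(ω) when A(ω) ≠ 0 and t when A(ω) = 0. -/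
open MeasureTheory Filter

lemma aux_summable (C M κ t : ℝ) (hC : 0 ≤ C) (hM : 0 < M) (hκ0 : 0 ≤ κ) (hκ2 : κ < 2) :
    Summable (fun n : ℕ => |t| ^ (2 * n + 3) / ((2 * n + 3).factorial : ℝ) *
      (C * M ^ n * ((n.factorial : ℝ)) ^ κ)) := by
  apply summable_of_ratio_norm_eventually_le (r := 1/2) (by norm_num)
  have hpow : Tendsto (fun n : ℕ => 2 * ((n : ℝ) + 1) ^ (2 - κ)) atTop atTop := by
    have h1 : Tendsto (fun x : ℝ => x ^ (2 - κ)) atTop atTop :=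
      tendsto_rpow_atTop (by linarith)
    have h2 : Tendsto (fun n : ℕ => ((n : ℝ) + 1)) atTop atTop :=
      tendsto_atTop_add_const_right _ 1 tendsto_natCast_atTop_atTop
    exact (h1.comp h2).const_mul_atTop (by norm_num)
  filter_upwards [hpow.eventually_ge_atTop (t ^ 2 * M)] with n hn
  have hfac3 : (0 : ℝ) < ((2 * n + 3).factorial : ℝ) := by positivity
  have hnn : (0 : ℝ) ≤ |t| ^ (2 * n + 3) / ((2 * n + 3).factorial : ℝ) *
      (C * M ^ n * ((n.factorial : ℝ)) ^ κ) := by positivity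
  have hnn' : (0 : ℝ) ≤ |t| ^ (2 * (n+1) + 3) / ((2 * (n+1) + 3).factorial : ℝ) *
      (C * M ^ (n+1) * (((n+1).factorial : ℝ)) ^ κ) := by positivity
  rw [Real.norm_eq_abs, Real.norm_eq_abs, abs_of_nonneg hnn, abs_of_nonneg hnn']
  have hq : t ^ 2 * M * ((n : ℝ) + 1) ^ κ ≤
      (1/2) * ((2 * (n : ℝ) + 4) * (2 * (n : ℝ) + 5)) := by
    have h1 : ((n : ℝ) + 1) ^ (2 - κ) * ((n : ℝ) + 1) ^ κ = ((n : ℝ) + 1) ^ (2 : ℕ) := by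
      rw [← Real.rpow_natCast ((n : ℝ) + 1) 2, ← Real.rpow_add (by positivity)]
      norm_num
    calc t ^ 2 * M * ((n : ℝ) + 1) ^ κ
        ≤ 2 * ((n : ℝ) + 1) ^ (2 - κ) * ((n : ℝ) + 1) ^ κ :=
          mul_le_mul_of_nonneg_right hn (Real.rpow_nonneg (by positivity) _)
      _ = 2 * ((n : ℝ) + 1) ^ (2 : ℕ) := by rw [mul_assoc, h1]
      _ ≤ (1/2) * ((2 * (n : ℝ) + 4) * (2 * (n : ℝ) + 5)) := by
          nlinarith [sq_nonneg ((n : ℝ) + 1)]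
  have hfaceq : (((2 * (n+1) + 3).factorial : ℕ) : ℝ) =
      (2 * (n : ℝ) + 5) * ((2 * (n : ℝ) + 4) * ((2 * n + 3).factorial : ℝ)) := by
    have h5 : 2 * (n + 1) + 3 = (2 * n + 3) + 1 + 1 := by ring
    rw [h5, Nat.factorial_succ, Nat.factorial_succ]
    push_cast
    ring
  have hrpoweq : (((n+1).factorial : ℝ)) ^ κ = ((n : ℝ) + 1) ^ κ * ((n.factorial : ℝ)) ^ κ := by
    rw [Nat.factorial_succ]
    push_cast
    rw [Real.mul_rpow (by positivity) (by positivity)]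
  have habs : |t| ^ (2 * (n+1) + 3) = |t| ^ (2 * n + 3) * t ^ 2 := by
    rw [← sq_abs t, ← pow_add]
    ring_nf
  have heq : |t| ^ (2 * (n+1) + 3) / ((2 * (n+1) + 3).factorial : ℝ) *
      (C * M ^ (n+1) * (((n+1).factorial : ℝ)) ^ κ) =
      (|t| ^ (2 * n + 3) / ((2 * n + 3).factorial : ℝ) * (C * M ^ n * ((n.factorial : ℝ)) ^ κ)) *
      (t ^ 2 * M * ((n : ℝ) + 1) ^ κ / ((2 * (n : ℝ) + 4) * (2 * (n : ℝ) + 5))) := by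
    rw [hfaceq, hrpoweq, habs]
    field_simp
    ring
  rw [heq]
  rw [mul_comm (1/2 : ℝ)]
  apply mul_le_mul_of_nonneg_left _ hnn
  rw [div_le_iff₀ (by positivity)]
  linarith

/-- Under the growth condition `‖(A²)^n‖₂ ≤ C M^{n−1} ((n−1)!)^κ`, `0 ≤ κ < 2`, the
series `∑ (−1)^k (A²)^k t^{2k+1}/(2k+1)!` converges in `L²(Ω)` (its partial sums are
Cauchy), and pointwise its limit is `sin(A(ω)t)/A(ω)` if `A(ω) ≠ 0` and `t` otherwise. -/
theorem random_sine_series_ms_convergent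
    {Ω : Type*} [MeasurableSpace Ω] (μ : Measure Ω) [IsProbabilityMeasure μ]
    {A : Ω → ℝ} (hmem : ∀ n : ℕ, MemLp (fun ω => ((A ω) ^ 2) ^ n) 2 μ)
    {C M κ : ℝ} (hM : 0 < M) (hκ0 : 0 ≤ κ) (hκ2 : κ < 2)
    (hbd : ∀ n : ℕ, 1 ≤ n →
      ‖(hmem n).toLp (fun ω => ((A ω) ^ 2) ^ n)‖ ≤
        C * M ^ (n - 1) * ((n - 1).factorial : ℝ) ^ κ)
    (t : ℝ) :
    CauchySeq (fun N : ℕ => ∑ k ∈ Finset.range (N + 1),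
      ((-1 : ℝ) ^ k * t ^ (2 * k + 1) / ((2 * k + 1).factorial : ℝ)) •
        (hmem k).toLp (fun ω => ((A ω) ^ 2) ^ k)) ∧
    ∀ ω, Tendsto (fun N : ℕ => ∑ k ∈ Finset.range (N + 1),
        (-1 : ℝ) ^ k * ((A ω) ^ 2) ^ k * t ^ (2 * k + 1) / ((2 * k + 1).factorial : ℝ))
      atTop (nhds (if A ω = 0 then t else Real.sin (A ω * t) / A ω)) := by
  constructor
  · -- Cauchy in L²
    have hC : 0 ≤ C := by
      have h := hbd 1 le_rfl
      simp [Real.one_rpow] at h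
      exact le_trans ENNReal.toReal_nonneg h
    apply cauchySeq_of_summable_dist
    have hs := aux_summable C M κ t hC hM hκ0 hκ2
    apply hs.of_nonneg_of_le (fun n => dist_nonneg)
    intro n
    rw [dist_comm, dist_eq_norm, Finset.sum_range_succ]
    simp only [add_sub_cancel_left]
    rw [norm_smul]
    have habs : ‖(-1 : ℝ) ^ (n+1) * t ^ (2 * (n+1) + 1) / ((2 * (n+1) + 1).factorial : ℝ)‖ =
        |t| ^ (2 * n + 3) / ((2 * n + 3).factorial : ℝ) := by
      have h3 : 2 * (n + 1) + 1 = 2 * n + 3 := by ring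
      rw [h3, Real.norm_eq_abs, abs_div, abs_mul, abs_pow, abs_pow, abs_neg, abs_one, one_pow,
        one_mul, Nat.abs_cast]
    rw [habs]
    apply mul_le_mul_of_nonneg_left _ (by positivity)
    have h := hbd (n+1) (Nat.le_add_left 1 n)
    simpa using h
  · -- pointwise convergence
    intro ω
    by_cases hA : A ω = 0
    · simp only [hA, if_true]
      have hconst : ∀ N : ℕ, (∑ k ∈ Finset.range (N + 1),
          (-1 : ℝ) ^ k * (((0:ℝ)) ^ 2) ^ k * t ^ (2 * k + 1) / ((2 * k + 1).factorial : ℝ)) = t := by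
        intro N
        rw [Finset.sum_eq_single 0]
        · norm_num
        · intro k _ hk
          have hz : ((0:ℝ) ^ 2) ^ k = 0 := by
            simp [zero_pow hk]
          simp [hz]
          tauto
        · intro h
          exact absurd (Finset.mem_range.2 (Nat.succ_pos N)) h
      simp only [hconst]
      exact tendsto_const_nhds
    · simp only [hA, if_false]
      have h := (Real.hasSum_sin (A ω * t)).div_const (A ω)
      have heq : (fun k : ℕ => (-1 : ℝ) ^ k * (A ω * t) ^ (2 * k + 1) /
          ((2 * k + 1).factorial : ℝ) / A ω) =
          fun k : ℕ => (-1 : ℝ) ^ k * ((A ω) ^ 2) ^ k * t ^ (2 * k + 1) /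
            ((2 * k + 1).factorial : ℝ) := by
        funext k
        have hf : ((2 * k + 1).factorial : ℝ) ≠ 0 := by positivity
        have hp : (A ω * t) ^ (2 * k + 1) = A ω * ((A ω) ^ 2) ^ k * t ^ (2 * k + 1) := by
          rw [mul_pow, ← pow_mul]
          ring
        rw [hp]
        field_simp
      rw [heq] at h
      exact h.tendsto_sum_nat.comp (tendsto_add_atTop_nat 1)
end

section
/- Let A, Y₀, Y₁ be random variables with A essentially bounded, Y₀, Y₁ ∈ L²(Ω), and Y₀, Y₁ independent of A (as a pair, A independent of (Y₀,Y₁)). Define for s ∈ (−1,1) the random variable Y(s)(ω) = Y₀(ω)·cos(A(ω)(arccos s − π/2)) − (Y₁(ω)/A(ω))·sin(A(ω)(arccos s − π/2)) (interpreting sin(ax)/a as x when a = 0). Then s ↦ Y(s) is a map into L²(Ω), Y(0) = Y₀, and the mean-square derivative of Y at s = 0 equals Y₁. -/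
open MeasureTheory ProbabilityTheory Real


lemma abs_cos_sub_one_le' (x : ℝ) : |Real.cos x - 1| ≤ x ^ 2 / 2 := by
  rw [abs_sub_comm, abs_of_nonneg (by linarith [Real.cos_le_one x])]
  linarith [Real.one_sub_sq_div_two_le_cos (x := x)]

lemma abs_sin_sub_le' {x : ℝ} (hx : |x| ≤ 1) : |Real.sin x - x| ≤ |x| ^ 3 / 4 := by
  have key : ∀ y : ℝ, 0 ≤ y → y ≤ 1 → |Real.sin y - y| ≤ y ^ 3 / 4 := by
    intro y hy hy1
    rcases eq_or_lt_of_le hy with rfl | hy'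
    · simp
    · rw [abs_sub_comm, abs_of_nonneg (by linarith [Real.sin_le hy])]
      linarith [Real.sin_gt_sub_cube hy', pow_nonneg hy 3]
  rcases le_total 0 x with h | h
  · rw [abs_of_nonneg h] at hx ⊢; exact key x h hx
  · rw [abs_of_nonpos h] at hx ⊢
    have := key (-x) (by linarith) hx
    rw [Real.sin_neg] at this
    calc |Real.sin x - x| = |-(Real.sin x) - (-x)| := by rw [← neg_sub]; rw [abs_neg]; ring_nf
    _ ≤ (-x) ^ 3 / 4 := this
    _ = _ := by ring

/-- pointwise estimate: here `t = arcsin s`, so `arccos s - π/2 = -t`. -/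
lemma key_pointwise (a y0 y1 s t c : ℝ) (ha : |a| ≤ c) (ht : |t| ≤ 1) (hat : |a * t| ≤ 1) :
    |y0 * Real.cos (a * -t) -
      (if a = 0 then y1 * -t else y1 / a * Real.sin (a * -t)) - y0 - s * y1|
      ≤ (|y0| + |y1|) * (c ^ 2 * t ^ 2 + |t - s|) := by
  have hc : 0 ≤ c := le_trans (abs_nonneg a) ha
  have hc2 : a ^ 2 ≤ c ^ 2 := by
    have := abs_nonneg a; nlinarith [sq_abs a]
  have hts : 0 ≤ |t - s| := abs_nonneg _
  have hy0 : 0 ≤ |y0| := abs_nonneg _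
  have hy1 : 0 ≤ |y1| := abs_nonneg _
  by_cases h0 : a = 0
  · subst h0
    have hif : (if (0:ℝ) = 0 then y1 * -t else y1 / 0 * Real.sin (0 * -t)) = y1 * -t :=
      if_pos rfl
    rw [hif, zero_mul, Real.cos_zero]
    have heq : y0 * 1 - y1 * -t - y0 - s * y1 = y1 * (t - s) := by ring
    rw [heq, abs_mul]
    have h1 : 0 ≤ c ^ 2 * t ^ 2 := by positivity
    nlinarith
  · rw [if_neg h0]
    have hexp : y0 * Real.cos (a * -t) - y1 / a * Real.sin (a * -t) - y0 - s * y1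
        = y0 * (Real.cos (a * t) - 1) + y1 / a * (Real.sin (a * t) - a * t)
          + y1 * (t - s) := by
      rw [mul_neg, Real.cos_neg, Real.sin_neg]
      field_simp
      ring
    rw [hexp]
    have hb1 : |y0 * (Real.cos (a * t) - 1)| ≤ |y0| * (a ^ 2 * t ^ 2 / 2) := by
      rw [abs_mul]
      have := abs_cos_sub_one_le' (a * t)
      have : |Real.cos (a * t) - 1| ≤ a ^ 2 * t ^ 2 / 2 := by
        calc |Real.cos (a * t) - 1| ≤ (a * t) ^ 2 / 2 := abs_cos_sub_one_le' _
        _ = a ^ 2 * t ^ 2 / 2 := by ring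
      exact mul_le_mul_of_nonneg_left this hy0
    have hb2 : |y1 / a * (Real.sin (a * t) - a * t)| ≤ |y1| * (a ^ 2 * t ^ 2 / 4) := by
      rw [abs_mul, abs_div]
      have hsin : |Real.sin (a * t) - a * t| ≤ |a * t| ^ 3 / 4 := abs_sin_sub_le' hat
      have ha0 : 0 < |a| := abs_pos.mpr h0
      have ht2 : |t| ^ 3 ≤ |t| ^ 2 := by
        have := abs_nonneg t
        nlinarith
      calc |y1| / |a| * |Real.sin (a * t) - a * t|
          ≤ |y1| / |a| * (|a * t| ^ 3 / 4) := by
            exact mul_le_mul_of_nonneg_left hsin (by positivity)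
        _ = |y1| * (a ^ 2 * |t| ^ 3 / 4) := by
            rw [abs_mul, mul_pow, show |a| ^ 3 = |a| * |a| ^ 2 by ring, sq_abs]
            field_simp
        _ ≤ |y1| * (a ^ 2 * t ^ 2 / 4) := by
            apply mul_le_mul_of_nonneg_left _ hy1
            rw [← sq_abs t]
            have h2 : (0:ℝ) ≤ a ^ 2 := sq_nonneg a
            nlinarith
    have hb3 : |y1 * (t - s)| ≤ |y1| * |t - s| := by rw [abs_mul]
    have ht0 : 0 ≤ t ^ 2 := sq_nonneg t
    calc |y0 * (Real.cos (a * t) - 1) + y1 / a * (Real.sin (a * t) - a * t) + y1 * (t - s)|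
        ≤ |y0 * (Real.cos (a * t) - 1)| + |y1 / a * (Real.sin (a * t) - a * t)|
          + |y1 * (t - s)| := by
          exact (abs_add_le _ _).trans (by gcongr; exact abs_add_le _ _)
      _ ≤ |y0| * (a ^ 2 * t ^ 2 / 2) + |y1| * (a ^ 2 * t ^ 2 / 4) + |y1| * |t - s| := by
          gcongr
      _ ≤ (|y0| + |y1|) * (c ^ 2 * t ^ 2 + |t - s|) := by
          have h4 : |y0| * (a ^ 2 * t ^ 2) ≤ |y0| * (c ^ 2 * t ^ 2) :=
            mul_le_mul_of_nonneg_left (mul_le_mul_of_nonneg_right hc2 ht0) hy0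
          have h5 : |y1| * (a ^ 2 * t ^ 2) ≤ |y1| * (c ^ 2 * t ^ 2) :=
            mul_le_mul_of_nonneg_left (mul_le_mul_of_nonneg_right hc2 ht0) hy1
          nlinarith [mul_nonneg hy0 hts, mul_nonneg hy1 hts,
            mul_nonneg hy0 (mul_nonneg (sq_nonneg c) ht0),
            mul_nonneg hy1 (mul_nonneg (sq_nonneg c) ht0)]

/-- For `A` essentially bounded, `Y₀, Y₁ ∈ L²` independent of `A`, the process
`Y(s) = Y₀ cos(A(arccos s − π/2)) − (Y₁/A) sin(A(arccos s − π/2))` (with `sin(ax)/a`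
read as `x` when `a = 0`) defines a map into `L²(Ω)` with `Y(0) = Y₀` whose mean-square
derivative at `s = 0` is `Y₁`. -/
theorem chebyshev_solution_initial_conditions
    {Ω : Type*} [MeasurableSpace Ω] (μ : Measure Ω) [IsProbabilityMeasure μ]
    {A Y₀ Y₁ : Ω → ℝ} (hAm : Measurable A) (hY₀m : Measurable Y₀) (hY₁m : Measurable Y₁)
    {c : ℝ} (hbd : ∀ᵐ ω ∂μ, |A ω| ≤ c)
    (hY₀ : MemLp Y₀ 2 μ) (hY₁ : MemLp Y₁ 2 μ)
    (hind : IndepFun A (fun ω => (Y₀ ω, Y₁ ω)) μ) :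
    ∃ YL : ℝ → Lp ℝ 2 μ,
      (∀ s ∈ Set.Ioo (-1 : ℝ) 1,
        (YL s : Ω → ℝ) =ᵐ[μ] fun ω =>
          Y₀ ω * Real.cos (A ω * (arccos s - π / 2)) -
            (if A ω = 0 then Y₁ ω * (arccos s - π / 2)
              else Y₁ ω / A ω * Real.sin (A ω * (arccos s - π / 2)))) ∧
      (YL 0 : Ω → ℝ) =ᵐ[μ] Y₀ ∧
      HasDerivAt YL (hY₁.toLp Y₁) 0 := by
  classical
  have hc0 : 0 ≤ c := by
    obtain ⟨ω, hω⟩ := hbd.exists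
    exact le_trans (abs_nonneg _) hω
  set g : ℝ → Ω → ℝ := fun s ω =>
    Y₀ ω * Real.cos (A ω * (arccos s - π / 2)) -
      (if A ω = 0 then Y₁ ω * (arccos s - π / 2)
        else Y₁ ω / A ω * Real.sin (A ω * (arccos s - π / 2))) with hg
  have hgm : ∀ s, Measurable (g s) := by
    intro s
    apply Measurable.sub
    · exact hY₀m.mul (Real.measurable_cos.comp (hAm.mul_const _))
    · exact Measurable.ite (hAm (measurableSet_singleton 0))
        (hY₁m.mul_const _)
        ((hY₁m.div hAm).mul (Real.measurable_sin.comp (hAm.mul_const _)))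
  have hmem : ∀ s, MemLp (g s) 2 μ := by
    intro s
    have hdom : MemLp (fun ω => |Y₀ ω| + |arccos s - π / 2| * |Y₁ ω|) 2 μ :=
      hY₀.abs.add (hY₁.abs.const_mul _)
    refine MemLp.of_le hdom (hgm s).aestronglyMeasurable
      (Filter.Eventually.of_forall fun ω => ?_)
    simp only [Real.norm_eq_abs]
    rw [abs_of_nonneg (by positivity : (0:ℝ) ≤ |Y₀ ω| + |arccos s - π / 2| * |Y₁ ω|)]
    have h1 : |Y₀ ω * Real.cos (A ω * (arccos s - π / 2))| ≤ |Y₀ ω| := by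
      rw [abs_mul]
      exact mul_le_of_le_one_right (abs_nonneg _) (Real.abs_cos_le_one _)
    have h2 : |if A ω = 0 then Y₁ ω * (arccos s - π / 2)
        else Y₁ ω / A ω * Real.sin (A ω * (arccos s - π / 2))|
        ≤ |arccos s - π / 2| * |Y₁ ω| := by
      split_ifs with h
      · rw [abs_mul]; exact le_of_eq (mul_comm _ _)
      · rw [abs_mul, abs_div]
        have ha0 : 0 < |A ω| := abs_pos.mpr h
        have hs : |Real.sin (A ω * (arccos s - π / 2))| ≤ |A ω| * |arccos s - π / 2| := by
          rw [← abs_mul]; exact Real.abs_sin_le_abs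
        calc |Y₁ ω| / |A ω| * |Real.sin (A ω * (arccos s - π / 2))|
            ≤ |Y₁ ω| / |A ω| * (|A ω| * |arccos s - π / 2|) :=
              mul_le_mul_of_nonneg_left hs (by positivity)
          _ = |arccos s - π / 2| * |Y₁ ω| := by field_simp
    calc |g s ω| ≤ |Y₀ ω * Real.cos (A ω * (arccos s - π / 2))| +
        |if A ω = 0 then Y₁ ω * (arccos s - π / 2)
          else Y₁ ω / A ω * Real.sin (A ω * (arccos s - π / 2))| := abs_sub _ _
      _ ≤ |Y₀ ω| + |arccos s - π / 2| * |Y₁ ω| := add_le_add h1 h2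
  have hg0 : g 0 = Y₀ := by
    funext ω
    simp only [hg, Real.arccos_zero, sub_self, mul_zero, Real.cos_zero, Real.sin_zero,
      mul_one]
    split_ifs <;> simp
  refine ⟨fun s => (hmem s).toLp (g s), fun s _ => (hmem s).coeFn_toLp, ?_, ?_⟩
  · exact (hmem 0).coeFn_toLp.trans (hg0 ▸ Filter.EventuallyEq.rfl)
  -- the derivative
  set h : Ω → ℝ := fun ω => |Y₀ ω| + |Y₁ ω| with hh
  have hmemh : MemLp h 2 μ := hY₀.abs.add hY₁.abs
  set K : ℝ := (eLpNorm h 2 μ).toReal with hK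
  have hK0 : 0 ≤ K := ENNReal.toReal_nonneg
  set ε : ℝ → ℝ := fun s => c ^ 2 * (Real.arcsin s) ^ 2 + |Real.arcsin s - s| with hε
  have hε0 : ∀ s, 0 ≤ ε s := fun s => by positivity
  have hnorm : ∀ s : ℝ, ‖(hmem s).toLp (g s) - (hmem 0).toLp (g 0) - s • hY₁.toLp Y₁‖
      = (eLpNorm (fun ω => g s ω - Y₀ ω - s * Y₁ ω) 2 μ).toReal := by
    intro s
    rw [Lp.norm_def]
    congr 1
    apply eLpNorm_congr_ae
    have h4 := Lp.coeFn_sub ((hmem s).toLp (g s)) ((hmem 0).toLp (g 0))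
    have h5 := Lp.coeFn_sub ((hmem s).toLp (g s) - (hmem 0).toLp (g 0)) (s • hY₁.toLp Y₁)
    have h6 := Lp.coeFn_smul s (hY₁.toLp Y₁)
    filter_upwards [(hmem s).coeFn_toLp, (hmem 0).coeFn_toLp, hY₁.coeFn_toLp, h4, h5, h6]
      with ω e1 e2 e3 e4 e5 e6
    rw [e5, Pi.sub_apply, e4, Pi.sub_apply, e1, e2, e6, Pi.smul_apply, e3, smul_eq_mul,
      hg0]
  -- eventual bound on the norm
  have harc : Filter.Tendsto (fun s => |Real.arcsin s|) (nhds 0) (nhds 0) := by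
    have := (Real.continuous_arcsin.tendsto 0).abs
    simpa [Real.arcsin_zero] using this
  have hev : ∀ᶠ s in nhds (0:ℝ), |Real.arcsin s| ≤ 1 ∧ c * |Real.arcsin s| ≤ 1 := by
    have hpos : (0:ℝ) < min 1 (1 / (c + 1)) := lt_min one_pos (by positivity)
    filter_upwards [harc.eventually_lt_const hpos] with s hs
    have h1 : |Real.arcsin s| ≤ 1 := le_trans hs.le (min_le_left _ _)
    refine ⟨h1, ?_⟩
    have h2 : |Real.arcsin s| ≤ 1 / (c + 1) := le_trans hs.le (min_le_right _ _)
    have : c * |Real.arcsin s| ≤ c * (1 / (c + 1)) :=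
      mul_le_mul_of_nonneg_left h2 hc0
    calc c * |Real.arcsin s| ≤ c * (1 / (c + 1)) := this
      _ ≤ 1 := by rw [mul_one_div, div_le_one (by linarith)]; linarith
  have hEst : ∀ᶠ s in nhds (0:ℝ),
      ‖(hmem s).toLp (g s) - (hmem 0).toLp (g 0) - s • hY₁.toLp Y₁‖ ≤ ε s * K := by
    filter_upwards [hev] with s hs
    rw [hnorm s]
    have hae : ∀ᵐ ω ∂μ, ‖g s ω - Y₀ ω - s * Y₁ ω‖ ≤ ‖ε s * h ω‖ := by
      filter_upwards [hbd] with ω hω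
      have hat : |A ω * Real.arcsin s| ≤ 1 := by
        rw [abs_mul]
        calc |A ω| * |Real.arcsin s| ≤ c * |Real.arcsin s| :=
            mul_le_mul_of_nonneg_right hω (abs_nonneg _)
          _ ≤ 1 := hs.2
      have key := key_pointwise (A ω) (Y₀ ω) (Y₁ ω) s (Real.arcsin s) c hω hs.1 hat
      have harg : arccos s - π / 2 = -Real.arcsin s := by
        rw [Real.arccos_eq_pi_div_two_sub_arcsin]; ring
      simp only [Real.norm_eq_abs, hg, harg, hh]
      rw [abs_of_nonneg (by positivity : (0:ℝ) ≤ ε s * (|Y₀ ω| + |Y₁ ω|))]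
      calc |Y₀ ω * Real.cos (A ω * -Real.arcsin s) -
            (if A ω = 0 then Y₁ ω * -Real.arcsin s
              else Y₁ ω / A ω * Real.sin (A ω * -Real.arcsin s)) - Y₀ ω - s * Y₁ ω|
          ≤ (|Y₀ ω| + |Y₁ ω|) * (c ^ 2 * (Real.arcsin s) ^ 2 + |Real.arcsin s - s|) := key
        _ = ε s * (|Y₀ ω| + |Y₁ ω|) := by rw [hε]; ring
    have hstep : eLpNorm (fun ω => g s ω - Y₀ ω - s * Y₁ ω) 2 μ
        ≤ eLpNorm (ε s • h) 2 μ := eLpNorm_mono_ae hae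
    have hsmul : eLpNorm (ε s • h) 2 μ = ‖ε s‖₊ * eLpNorm h 2 μ := by
      rw [eLpNorm_const_smul, enorm_eq_nnnorm]
    calc (eLpNorm (fun ω => g s ω - Y₀ ω - s * Y₁ ω) 2 μ).toReal
        ≤ ((‖ε s‖₊ : ENNReal) * eLpNorm h 2 μ).toReal := by
          apply ENNReal.toReal_mono
          · exact ENNReal.mul_ne_top ENNReal.coe_ne_top hmemh.2.ne
          · rw [← hsmul]; exact hstep
      _ = ε s * K := by
          rw [ENNReal.toReal_mul, ENNReal.coe_toReal, coe_nnnorm, Real.norm_eq_abs,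
            abs_of_nonneg (hε0 s)]
  -- arcsin asymptotics
  have hd : HasDerivAt Real.arcsin 1 0 := by
    have := Real.hasDerivAt_arcsin (by norm_num : (0:ℝ) ≠ -1) (by norm_num : (0:ℝ) ≠ 1)
    simpa using this
  have hA1 : (fun s => Real.arcsin s) =O[nhds 0] (fun s : ℝ => s) := by
    have := hd.isBigO_sub
    simpa [Real.arcsin_zero] using this
  have ho1 : (fun s => Real.arcsin s) =o[nhds 0] (fun _ : ℝ => (1:ℝ)) := by
    rw [Asymptotics.isLittleO_one_iff]
    simpa [Real.arcsin_zero] using Real.continuous_arcsin.tendsto 0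
  have hsq : (fun s => (Real.arcsin s) ^ 2) =o[nhds 0] (fun s : ℝ => s) := by
    have := hA1.mul_isLittleO ho1
    simpa [sq] using this
  have hdiff : (fun s => Real.arcsin s - s) =o[nhds 0] (fun s : ℝ => s) := by
    have := hasDerivAt_iff_isLittleO.mp hd
    simpa [Real.arcsin_zero] using this
  have hφ : (fun s => ε s * K) =o[nhds 0] (fun s : ℝ => s) := by
    have hsum : ε =o[nhds 0] (fun s : ℝ => s) := by
      rw [hε]
      exact (hsq.const_mul_left (c ^ 2)).add hdiff.abs_left
    have := hsum.mul_isBigO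
      (Asymptotics.isBigO_const_const K (one_ne_zero (α := ℝ)) (nhds 0))
    simpa using this
  rw [hasDerivAt_iff_isLittleO]
  simp only [sub_zero]
  have hFO : (fun s => (hmem s).toLp (g s) - (hmem 0).toLp (g 0) - s • hY₁.toLp Y₁)
      =O[nhds 0] (fun s => ε s * K) := by
    rw [Asymptotics.isBigO_iff]
    refine ⟨1, ?_⟩
    filter_upwards [hEst] with s hsE
    rw [one_mul, Real.norm_eq_abs, abs_of_nonneg (mul_nonneg (hε0 s) hK0)]
    exact hsE
  exact hFO.trans_isLittleO hφ
end
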